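/- arXiv:2107.04637 — 4 statements merged into one kernel-verified Lean document; each statement's English description precedes it below -/
import Mathlib

section
/- Let α > −1 and W(x,y) = x^α y^{α+1} e^{−x−y}/(x+y) for x, y > 0. Let (p_k)_{k≥0} and (q_k)_{k≥0} be monic polynomials with deg p_k = deg q_k = k satisfying ∫_0^∞∫_0^∞ p_k(x) q_l(y) W(x,y) dx dy = h_k δ_{kl} with h_k ≠ 0. Write p_k(x) = Σ_{i=0}^k a_{k,i} x^i and q_k(y) = Σ_{i=0}^k â_{k,i} y^i, define b_{β,0} = 1, b_{β,i} = −Σ_{j=0}^{i−1} b_{β,j} a_{β−j,β−i} for i ≥ 1, and b̂_{β,0} = 1, b̂_{β,i} = −Σ_{j=0}^{i−1} b̂_{β,j} â_{β−j,β−i} for i ≥ 1, with the convention b_{β,i} = b̂_{β,i} = 0 for i < 0. Then for all β, k, j ∈ ℕ: (1/h_j)∫_0^∞∫_0^∞ x^β p_k(x) q_j(y) W(x,y) dx dy = Σ_{ℓ=0}^{k} a_{k,ℓ} b_{β+ℓ, β+ℓ−j}, and (1/h_j)∫_0^∞∫_0^∞ y^β p_j(x) q_k(y) W(x,y) dx dy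 = Σ_{ℓ=0}^{k} â_{k,ℓ} b̂_{β+ℓ, β+ℓ−j}. -/
open MeasureTheory Real

/-- The Cauchy-Laguerre weight `W(x,y) = x^α y^{α+1} e^{-x-y}/(x+y)`. -/
noncomputable def Wcl (α : ℝ) (x y : ℝ) : ℝ :=
  x ^ α * y ^ (α + 1) * Real.exp (-x - y) / (x + y)

/-- `b_{β,0} = 1`, `b_{β,i} = -Σ_{j=0}^{i-1} b_{β,j} a_{β-j,β-i}`. -/
noncomputable def bcoef (a : ℕ → ℕ → ℝ) (β : ℕ) : ℕ → ℝ
  | 0 => 1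
  | (i + 1) => -∑ j : Fin (i + 1), bcoef a β j * a (β - (j : ℕ)) (β - (i + 1))

/-- `b_{β,i}` extended to integer second index, with `b_{β,i} = 0` for `i < 0`. -/
noncomputable def bcoefZ (a : ℕ → ℕ → ℝ) (β : ℕ) (i : ℤ) : ℝ :=
  if 0 ≤ i then bcoef a β i.toNat else 0

/-! The integrals are values of the bilinear form `⟨P, Q⟩ = ∫∫ P(x) Q(y) W(x,y)` on polynomials,
which is well defined because `W(x,y) ≤ x^α e^{-x} · y^α e^{-y}`. The recursion defining
`b_{n,i}` says exactly that `x^n = ∑ᵢ b_{n,i} p_{n-i}` in the monic basis `(p_k)`. Expanding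
`x^β p_k = ∑_ℓ a_{k,ℓ} x^{β+ℓ}` in this basis and pairing with `q_j`, biorthogonality keeps only
the terms `p_j`, i.e. `i = β + ℓ - j`; symmetrically in the second variable. -/

open Polynomial Finset

lemma integrableOn_eval_mul_rpow_mul_exp_neg {α : ℝ} (hα : -1 < α) (P : ℝ[X]) :
    IntegrableOn (fun t => P.eval t * (t ^ α * exp (-t))) (Set.Ioi 0) := by
  induction P using Polynomial.induction_on' with
  | add P Q hP hQ =>
    exact (hP.add hQ).congr_fun (fun t _ => by simp only [Pi.add_apply, eval_add]; ring)
      measurableSet_Ioi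
  | monomial n c =>
    have hs : 0 < α + n + 1 := by linarith [n.cast_nonneg (α := ℝ)]
    refine IntegrableOn.congr_fun ((GammaIntegral_convergent hs).smul c)
      (fun t (ht : 0 < t) => ?_) measurableSet_Ioi
    rw [Pi.smul_apply, smul_eq_mul, eval_monomial, add_sub_cancel_right, rpow_add ht,
      rpow_natCast]
    ring

lemma Wcl_nonneg (α : ℝ) {x y : ℝ} (hx : 0 < x) (hy : 0 < y) : 0 ≤ Wcl α x y := by
  unfold Wcl; positivity

lemma Wcl_le (α : ℝ) {x y : ℝ} (hx : 0 < x) (hy : 0 < y) :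
    Wcl α x y ≤ (x ^ α * exp (-x)) * (y ^ α * exp (-y)) := by
  have hxy : y / (x + y) ≤ 1 := (div_le_one (by positivity)).2 (by linarith)
  calc Wcl α x y = (x ^ α * exp (-x)) * (y ^ α * exp (-y)) * (y / (x + y)) := by
        rw [Wcl, sub_eq_add_neg, exp_add, rpow_add_one hy.ne']
        ring
    _ ≤ (x ^ α * exp (-x)) * (y ^ α * exp (-y)) := mul_le_of_le_one_right (by positivity) hxy

lemma measurable_Wcl (α : ℝ) : Measurable (fun z : ℝ × ℝ => Wcl α z.1 z.2) := by
  unfold Wcl; fun_prop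

lemma integrable_eval_mul_eval_mul_Wcl {α : ℝ} (hα : -1 < α) (P Q : ℝ[X]) :
    Integrable (fun z : ℝ × ℝ => P.eval z.1 * Q.eval z.2 * Wcl α z.1 z.2)
      ((volume.restrict (Set.Ioi 0)).prod (volume.restrict (Set.Ioi 0))) := by
  refine Integrable.mono' ((integrableOn_eval_mul_rpow_mul_exp_neg hα P).norm.mul_prod
    (integrableOn_eval_mul_rpow_mul_exp_neg hα Q).norm) ?_ ?_
  · exact (((P.continuous.measurable.comp measurable_fst).mul
      (Q.continuous.measurable.comp measurable_snd)).mul (measurable_Wcl α)).aestronglyMeasurable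
  · rw [Measure.prod_restrict]
    filter_upwards [ae_restrict_mem (measurableSet_Ioi.prod measurableSet_Ioi)]
      with ⟨x, y⟩ ⟨(hx : 0 < x), (hy : 0 < y)⟩
    simp only [norm_mul, norm_eq_abs, abs_of_nonneg (Wcl_nonneg α hx hy)]
    calc _ ≤ |P.eval x| * |Q.eval y| * ((x ^ α * exp (-x)) * (y ^ α * exp (-y))) := by
          gcongr; exact Wcl_le α hx hy
      _ = _ := by
          rw [abs_of_pos (rpow_pos_of_pos hx α), abs_of_pos (rpow_pos_of_pos hy α),
            abs_exp, abs_exp]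
          ring

lemma integral_integral_eval_mul_eval_mul_Wcl {α : ℝ} (hα : -1 < α) (P Q : ℝ[X]) :
    ∫ x in Set.Ioi (0:ℝ), ∫ y in Set.Ioi (0:ℝ), P.eval x * Q.eval y * Wcl α x y =
      ∫ z, P.eval z.1 * Q.eval z.2 * Wcl α z.1 z.2
        ∂(volume.restrict (Set.Ioi 0)).prod (volume.restrict (Set.Ioi 0)) :=
  integral_integral (integrable_eval_mul_eval_mul_Wcl hα P Q)

noncomputable def cauchyLaguerrePairing {α : ℝ} (hα : -1 < α) : ℝ[X] →ₗ[ℝ] ℝ[X] →ₗ[ℝ] ℝ :=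
  LinearMap.mk₂ ℝ
    (fun P Q => ∫ x in Set.Ioi (0:ℝ), ∫ y in Set.Ioi (0:ℝ), P.eval x * Q.eval y * Wcl α x y)
    (fun P₁ P₂ Q => by
      simp only [integral_integral_eval_mul_eval_mul_Wcl hα]
      simp only [eval_add, add_mul]
      exact integral_add (integrable_eval_mul_eval_mul_Wcl hα P₁ Q)
        (integrable_eval_mul_eval_mul_Wcl hα P₂ Q))
    (fun c P Q => by
      simp only [smul_eq_mul, ← integral_const_mul, eval_smul, mul_assoc])
    (fun P Q₁ Q₂ => by
      simp only [integral_integral_eval_mul_eval_mul_Wcl hα]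
      simp only [eval_add, mul_add, add_mul]
      exact integral_add (integrable_eval_mul_eval_mul_Wcl hα P Q₁)
        (integrable_eval_mul_eval_mul_Wcl hα P Q₂))
    (fun c P Q => by
      simp only [smul_eq_mul, ← integral_const_mul, eval_smul, mul_left_comm c, mul_assoc])

lemma cauchyLaguerrePairing_apply {α : ℝ} (hα : -1 < α) (P Q : ℝ[X]) :
    cauchyLaguerrePairing hα P Q =
      ∫ x in Set.Ioi (0:ℝ), ∫ y in Set.Ioi (0:ℝ), P.eval x * Q.eval y * Wcl α x y :=
  rfl

lemma sum_range_bcoef_mul (a : ℕ → ℕ → ℝ) (ha : ∀ k, a k k = 1) (n r : ℕ) :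
    ∑ i ∈ range (r + 1), bcoef a n i * a (n - i) (n - r) = if r = 0 then 1 else 0 := by
  rw [sum_range_succ, ha, mul_one]
  cases r with
  | zero => simp [bcoef]
  | succ s =>
    rw [bcoef, ← Finset.sum_range (fun i => bcoef a n i * a (n - i) (n - (s + 1)))]
    simp

lemma sum_range_bcoef_mul_ite (a : ℕ → ℕ → ℝ) (c : ℝ) (n j : ℕ) :
    ∑ i ∈ range (n + 1), bcoef a n i * (if n - i = j then c else 0) =
      c * bcoefZ a n ((n : ℤ) - j) := by
  by_cases hj : j ≤ n
  · rw [sum_eq_single_of_mem (n - j) (mem_range.2 (by omega)) fun i hi hne => by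
      rw [if_neg (by simp only [mem_range] at hi; omega), mul_zero]]
    rw [if_pos (by omega), bcoefZ, if_pos (by omega), show ((n : ℤ) - j).toNat = n - j by omega,
      mul_comm]
  · rw [bcoefZ, if_neg (by omega), mul_zero]
    exact sum_eq_zero fun i hi => by
      rw [if_neg (by simp only [mem_range] at hi; omega), mul_zero]

section MonicBasis

variable (p : ℕ → ℝ[X]) (hpm : ∀ k, (p k).Monic) (hpd : ∀ k, (p k).natDegree = k)
include hpm hpd

lemma X_pow_eq_sum_bcoef (n : ℕ) :
    (X : ℝ[X]) ^ n =
      ∑ i ∈ range (n + 1), C (bcoef (fun k i => (p k).coeff i) n i) * p (n - i) := by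
  have hdiag : ∀ k, (p k).coeff k = 1 := fun k => by
    simpa only [hpd] using (hpm k).coeff_natDegree
  have hvanish : ∀ k m, k < m → (p k).coeff m = 0 := fun k m hkm =>
    coeff_eq_zero_of_natDegree_lt (by rwa [hpd])
  ext m
  simp only [finsetSum_coeff, coeff_C_mul, coeff_X_pow]
  by_cases hm : n < m
  · rw [if_neg hm.ne', sum_eq_zero fun i _ => by rw [hvanish _ _ (by omega), mul_zero]]
  obtain ⟨r, hr, rfl⟩ : ∃ r ≤ n, m = n - r := ⟨n - m, by omega, by omega⟩
  have htail : ∀ i ∈ range (n + 1), i ∉ range (r + 1) →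
      bcoef (fun k i => (p k).coeff i) n i * (p (n - i)).coeff (n - r) = 0 := fun i hi hir => by
    simp only [mem_range] at hi hir
    rw [hvanish _ _ (by omega), mul_zero]
  rw [← sum_subset (range_subset_range.2 (by omega)) htail,
    sum_range_bcoef_mul _ hdiag]
  exact if_congr (by omega) rfl rfl

variable (L : ℝ[X] →ₗ[ℝ] ℝ) (c : ℝ) (j : ℕ) (hL : ∀ m, L (p m) = if m = j then c else 0)
include hL

lemma apply_X_pow_of_apply_eq_ite (n : ℕ) :
    L (X ^ n) = c * bcoefZ (fun k i => (p k).coeff i) n ((n : ℤ) - j) := by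
  simp only [X_pow_eq_sum_bcoef p hpm hpd n, map_sum, C_mul', map_smul, hL, smul_eq_mul]
  exact sum_range_bcoef_mul_ite _ c n j

lemma apply_X_pow_mul_of_apply_eq_ite (β k : ℕ) :
    L (X ^ β * p k) = c * ∑ ℓ ∈ range (k + 1),
      (p k).coeff ℓ * bcoefZ (fun k i => (p k).coeff i) (β + ℓ) ((β : ℤ) + ℓ - j) := by
  conv_lhs => rw [as_sum_range_C_mul_X_pow (p k), hpd]
  simp only [mul_sum, map_sum]
  refine sum_congr rfl fun ℓ _ => ?_
  rw [mul_left_comm, ← pow_add, C_mul', map_smul,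
    apply_X_pow_of_apply_eq_ite p hpm hpd L c j hL, smul_eq_mul]
  push_cast
  ring

end MonicBasis

theorem power_against_pq (α : ℝ) (hα : -1 < α)
    (p q : ℕ → Polynomial ℝ) (h : ℕ → ℝ)
    (hpm : ∀ k, (p k).Monic) (hpd : ∀ k, (p k).natDegree = k)
    (hqm : ∀ k, (q k).Monic) (hqd : ∀ k, (q k).natDegree = k)
    (hh : ∀ k, h k ≠ 0)
    (hbo : ∀ k l, (∫ x in Set.Ioi (0:ℝ), ∫ y in Set.Ioi (0:ℝ),
        (p k).eval x * (q l).eval y * Wcl α x y) = if k = l then h k else 0)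
    (β k j : ℕ) :
    (1 / h j) * (∫ x in Set.Ioi (0:ℝ), ∫ y in Set.Ioi (0:ℝ),
        x ^ β * (p k).eval x * (q j).eval y * Wcl α x y) =
      (∑ ℓ ∈ Finset.range (k + 1),
        (p k).coeff ℓ * bcoefZ (fun k' i => (p k').coeff i) (β + ℓ) ((β : ℤ) + ℓ - j)) ∧
    (1 / h j) * (∫ x in Set.Ioi (0:ℝ), ∫ y in Set.Ioi (0:ℝ),
        y ^ β * (p j).eval x * (q k).eval y * Wcl α x y) =
      ∑ ℓ ∈ Finset.range (k + 1),
        (q k).coeff ℓ * bcoefZ (fun k' i => (q k').coeff i) (β + ℓ) ((β : ℤ) + ℓ - j) := by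
  have hp : ∀ m, (cauchyLaguerrePairing hα).flip (q j) (p m) = if m = j then h j else 0 := fun m =>
    (hbo m j).trans (ite_congr rfl (congrArg h) fun _ => rfl)
  have hq : ∀ m, cauchyLaguerrePairing hα (p j) (q m) = if m = j then h j else 0 := fun m => by
    rw [cauchyLaguerrePairing_apply, hbo]
    exact if_congr eq_comm rfl rfl
  have hx : (∫ x in Set.Ioi (0:ℝ), ∫ y in Set.Ioi (0:ℝ),
      x ^ β * (p k).eval x * (q j).eval y * Wcl α x y) =
        (cauchyLaguerrePairing hα).flip (q j) (X ^ β * p k) := by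
    simp only [LinearMap.flip_apply, cauchyLaguerrePairing_apply, eval_mul, eval_pow, eval_X]
  have hy : (∫ x in Set.Ioi (0:ℝ), ∫ y in Set.Ioi (0:ℝ),
      y ^ β * (p j).eval x * (q k).eval y * Wcl α x y) =
        cauchyLaguerrePairing hα (p j) (X ^ β * q k) := by
    simp only [cauchyLaguerrePairing_apply, eval_mul, eval_pow, eval_X,
      mul_left_comm (eval _ (p j)), mul_assoc]
  rw [hx, hy,
    apply_X_pow_mul_of_apply_eq_ite p hpm hpd _ (h j) j hp,
    apply_X_pow_mul_of_apply_eq_ite q hqm hqd _ (h j) j hq]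
  simp only [one_div, inv_mul_cancel_left₀ (hh j), and_self]
end

section
/- Let α > −1 be real. Define a_{k,j} = (−1)^{k−j} C(k,j) Γ(2α+k+j+2)Γ(2α+k+2)Γ(α+k+1) / (Γ(2α+2k+2)Γ(2α+j+2)Γ(α+j+1)) and â_{k,j} = (−1)^{k−j} C(k,j) Γ(2α+k+j+2)Γ(2α+k+2)Γ(α+k+2) / (Γ(2α+2k+2)Γ(2α+j+2)Γ(α+j+2)) for 0 ≤ j ≤ k, and define b_{k,0} = 1, b_{k,i} = −Σ_{j=0}^{i−1} b_{k,j} a_{k−j,k−i} and b̂_{k,0} = 1, b̂_{k,i} = −Σ_{j=0}^{i−1} b̂_{k,j} â_{k−j,k−i} for i ≥ 1. Then for all 0 ≤ j ≤ k one has the closed forms b_{k,j} = C(k,j) Γ(2α+k+2)Γ(α+k+1)Γ(2α+2k+3−2j) / (Γ(2α+k+2−j)Γ(α+k+1−j)Γ(2α+2k+3−j)) and b̂_{k,j} = C(k,j) Γ(2α+k+2)Γ(α+k+2)Γ(2α+2k+3−2j) / (Γ(2α+k+2−j)Γ(α+k+2−j)Γ(2α+2k+3−j)). -/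
open MeasureTheory Real

/-- Coefficients of the monic Cauchy-Laguerre biorthogonal polynomial `p_k`. -/
noncomputable def aCL (α : ℝ) (k j : ℕ) : ℝ :=
  (-1 : ℝ) ^ (k - j) * (Nat.choose k j) *
    (Real.Gamma (2 * α + k + j + 2) * Real.Gamma (2 * α + k + 2) * Real.Gamma (α + k + 1)) /
    (Real.Gamma (2 * α + 2 * k + 2) * Real.Gamma (2 * α + j + 2) * Real.Gamma (α + j + 1))

/-- Coefficients of the monic Cauchy-Laguerre biorthogonal polynomial `q_k`. -/
noncomputable def ahCL (α : ℝ) (k j : ℕ) : ℝ :=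
  (-1 : ℝ) ^ (k - j) * (Nat.choose k j) *
    (Real.Gamma (2 * α + k + j + 2) * Real.Gamma (2 * α + k + 2) * Real.Gamma (α + k + 2)) /
    (Real.Gamma (2 * α + 2 * k + 2) * Real.Gamma (2 * α + j + 2) * Real.Gamma (α + j + 2))

/-!
The recursion says that `(b_{k,j})_j` inverts the unitriangular array `(a_{k-j,k-i})`, so it is
enough to check that the closed form `B` satisfies `∑_{j ≤ m} B_{k,j} a_{k-j,k-m} = 0` for
`1 ≤ m ≤ k`. Both `a` and `â` are the cases `β = α`, `β = α + 1` of one family with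
`Γ(β + k + 1) / Γ(β + j + 1)` in place of the last Gamma quotient. After cancellation the `j`-th
summand is a common factor times `(-1)^j C(m,j) (x - 2j) Γ(x - m - j) / Γ(x - j + 1)` with
`x = 2α + 2k + 2`, and the partial sums of these terms telescope to
`(-1)^l C(m-1,l) Γ(x - m - l) / Γ(x - l)`, which vanishes at `l = m`.
-/
open Finset

noncomputable def clCoeff (α β : ℝ) (k j : ℕ) : ℝ :=
  (-1 : ℝ) ^ (k - j) * (Nat.choose k j) *
    (Real.Gamma (2 * α + k + j + 2) * Real.Gamma (2 * α + k + 2) * Real.Gamma (β + k + 1)) /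
    (Real.Gamma (2 * α + 2 * k + 2) * Real.Gamma (2 * α + j + 2) * Real.Gamma (β + j + 1))

noncomputable def clInvCoeff (α β : ℝ) (k j : ℕ) : ℝ :=
  (Nat.choose k j) * Real.Gamma (2 * α + k + 2) * Real.Gamma (β + k + 1) *
    Real.Gamma (2 * α + 2 * k + 3 - 2 * j) /
    (Real.Gamma (2 * α + k + 2 - j) * Real.Gamma (β + k + 1 - j) *
      Real.Gamma (2 * α + 2 * k + 3 - j))

noncomputable def altGammaTerm (x : ℝ) (n j : ℕ) : ℝ :=
  (-1 : ℝ) ^ j * n.choose j * (x - 2 * j) * Real.Gamma (x - n - j) / Real.Gamma (x - j + 1)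

theorem bcoef_eq_of_sum_eq_zero (a : ℕ → ℕ → ℝ) (β : ℕ) (f : ℕ → ℝ) (hf₀ : f 0 = 1)
    (ha : ∀ n ≤ β, a n n = 1)
    (hf : ∀ m, 1 ≤ m → m ≤ β → ∑ j ∈ range (m + 1), f j * a (β - j) (β - m) = 0) :
    ∀ i ≤ β, bcoef a β i = f i := by
  intro i
  induction i using Nat.strong_induction_on with
  | _ i ih =>
    intro hi
    rcases i with _ | m
    · rw [bcoef, hf₀]
    · have hsum := hf (m + 1) (Nat.succ_pos m) hi
      rw [sum_range_succ, ha _ (Nat.sub_le _ _), mul_one] at hsum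
      rw [bcoef, Fin.sum_univ_eq_sum_range (fun j => bcoef a β j * a (β - j) (β - (m + 1))),
        sum_congr rfl fun j hj => by rw [ih j (mem_range.mp hj) (by grind)]]
      linarith

theorem sum_range_altGammaTerm {x : ℝ} {m : ℕ} (hx : 2 * ((m : ℝ) + 1) < x) :
    ∀ l ≤ m + 1, ∑ j ∈ range (l + 1), altGammaTerm x (m + 1) j =
      (-1) ^ l * m.choose l * Real.Gamma (x - (m + 1) - l) / Real.Gamma (x - l) := by
  intro l
  induction l with
  | zero =>
    intro _
    have hx₀ : 0 < x := by linarith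
    have := (Real.Gamma_pos_of_pos hx₀).ne'
    simp only [zero_add, sum_range_one, altGammaTerm, Nat.choose_zero_right, pow_zero,
      Nat.cast_zero, Nat.cast_one, mul_zero, sub_zero, Real.Gamma_add_one hx₀.ne']
    push_cast
    field_simp
  | succ l ih =>
    intro hl
    have hl' : (l : ℝ) + 1 ≤ m + 1 := by exact_mod_cast hl
    have hy : 0 < x - (m + 1) - (l + 1) := by linarith
    have hz : 0 < x - (l + 1) := by linarith
    have hchoose : (m.choose (l + 1) : ℝ) * (l + 1) = m.choose l * (m - l) := by
      rw [← Nat.cast_sub (by omega)]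
      exact_mod_cast Nat.choose_succ_right_eq m l
    rw [sum_range_succ, ih (by omega), altGammaTerm, Nat.choose_succ_succ']
    push_cast
    rw [show x - (m + 1) - l = x - (m + 1) - (l + 1) + 1 by ring,
      show x - l = x - (l + 1) + 1 by ring,
      Real.Gamma_add_one hy.ne', Real.Gamma_add_one hz.ne']
    have := (Real.Gamma_pos_of_pos hz).ne'
    field_simp
    linear_combination (-1) ^ l * hchoose

theorem sum_range_altGammaTerm_eq_zero {x : ℝ} {m : ℕ} (hx : 2 * ((m : ℝ) + 1) < x) :
    ∑ j ∈ range (m + 2), altGammaTerm x (m + 1) j = 0 := by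
  rw [sum_range_altGammaTerm hx (m + 1) le_rfl, Nat.choose_succ_self]
  simp

theorem clInvCoeff_mul_clCoeff {α β : ℝ} (hα : -1 < α) (hβ : -1 < β) {k m j : ℕ}
    (hjm : j ≤ m) (hmk : m ≤ k) :
    clInvCoeff α β k j * clCoeff α β (k - j) (k - m) =
      (-1) ^ m * k.choose m *
        (Real.Gamma (2 * α + k + 2) * Real.Gamma (β + k + 1) /
          (Real.Gamma (2 * α + k + 2 - m) * Real.Gamma (β + k + 1 - m))) *
        altGammaTerm (2 * α + 2 * k + 2) m j := by
  have hj : (j : ℝ) ≤ m := by exact_mod_cast hjm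
  have hm : (m : ℝ) ≤ k := by exact_mod_cast hmk
  have hpos : (k.choose j : ℝ) ≠ 0 := by exact_mod_cast (Nat.choose_pos (hjm.trans hmk)).ne'
  have hchoose : ((k - j).choose (k - m) : ℝ) = k.choose m * m.choose j / k.choose j := by
    rw [eq_div_iff hpos, ← Nat.choose_symm (show k - m ≤ k - j by omega),
      show k - j - (k - m) = m - j by omega, mul_comm]
    exact_mod_cast (Nat.choose_mul (n := k) hjm).symm
  have hsign : (-1 : ℝ) ^ (k - j - (k - m)) = (-1) ^ m * (-1) ^ j := by
    obtain ⟨p, rfl⟩ := Nat.exists_eq_add_of_le hjm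
    rw [show k - j - (k - (j + p)) = p by omega, pow_add, mul_right_comm, ← mul_pow]
    norm_num
  have hx : 0 < 2 * α + 2 * k + 2 - 2 * j := by linarith
  have hΓ : ∀ {y : ℝ}, 0 < y → Real.Gamma y ≠ 0 := fun hy => (Real.Gamma_pos_of_pos hy).ne'
  have h₁ := hΓ hx
  have h₂ := hΓ (show 0 < 2 * α + k + 2 - j by linarith)
  have h₃ := hΓ (show 0 < β + k + 1 - j by linarith)
  have h₄ := hΓ (show 0 < 2 * α + k + 2 - m by linarith)
  have h₅ := hΓ (show 0 < β + k + 1 - m by linarith)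
  have h₆ := hΓ (show 0 < 2 * α + 2 * k + 3 - j by linarith)
  unfold clInvCoeff clCoeff altGammaTerm
  rw [hchoose, hsign, Nat.cast_sub (hjm.trans hmk), Nat.cast_sub hmk,
    show 2 * α + 2 * k + 3 - 2 * j = 2 * α + 2 * k + 2 - 2 * j + 1 by ring,
    Real.Gamma_add_one hx.ne',
    show 2 * α + (k - j : ℝ) + (k - m) + 2 = 2 * α + 2 * k + 2 - m - j by ring,
    show 2 * α + (k - j : ℝ) + 2 = 2 * α + k + 2 - j by ring,
    show β + (k - j : ℝ) + 1 = β + k + 1 - j by ring,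
    show 2 * α + 2 * (k - j : ℝ) + 2 = 2 * α + 2 * k + 2 - 2 * j by ring,
    show 2 * α + (k - m : ℝ) + 2 = 2 * α + k + 2 - m by ring,
    show β + (k - m : ℝ) + 1 = β + k + 1 - m by ring,
    show 2 * α + 2 * k + 2 - j + 1 = 2 * α + 2 * k + 3 - j by ring]
  -- `field_simp` would renormalise the Gamma arguments and no longer see `h₁, …, h₆`.
  generalize Real.Gamma (2 * α + 2 * k + 2 - 2 * j) = G₁ at h₁ ⊢
  generalize Real.Gamma (2 * α + k + 2 - j) = G₂ at h₂ ⊢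
  generalize Real.Gamma (β + k + 1 - j) = G₃ at h₃ ⊢
  generalize Real.Gamma (2 * α + k + 2 - m) = G₄ at h₄ ⊢
  generalize Real.Gamma (β + k + 1 - m) = G₅ at h₅ ⊢
  generalize Real.Gamma (2 * α + 2 * k + 3 - j) = G₆ at h₆ ⊢
  field_simp

theorem clCoeff_self {α β : ℝ} (hα : -1 < α) (hβ : -1 < β) (n : ℕ) : clCoeff α β n n = 1 := by
  have hn : (0 : ℝ) ≤ n := n.cast_nonneg
  rw [clCoeff, Nat.sub_self, pow_zero, Nat.choose_self, Nat.cast_one, one_mul, one_mul,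
    show 2 * α + n + n + 2 = 2 * α + 2 * n + 2 by ring, div_self]
  exact (mul_pos (mul_pos (Real.Gamma_pos_of_pos (by linarith)) (Real.Gamma_pos_of_pos
    (by linarith))) (Real.Gamma_pos_of_pos (by linarith))).ne'

theorem clInvCoeff_zero {α β : ℝ} (hα : -1 < α) (hβ : -1 < β) (k : ℕ) : clInvCoeff α β k 0 = 1 := by
  have hk : (0 : ℝ) ≤ k := k.cast_nonneg
  simp only [clInvCoeff, Nat.choose_zero_right, Nat.cast_zero, Nat.cast_one, mul_zero, sub_zero,
    one_mul]
  exact div_self (mul_pos (mul_pos (Real.Gamma_pos_of_pos (by linarith)) (Real.Gamma_pos_of_pos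
    (by linarith))) (Real.Gamma_pos_of_pos (by linarith))).ne'

theorem sum_clInvCoeff_mul_clCoeff_eq_zero {α β : ℝ} (hα : -1 < α) (hβ : -1 < β) {k m : ℕ}
    (hm : 1 ≤ m) (hmk : m ≤ k) :
    ∑ j ∈ range (m + 1), clInvCoeff α β k j * clCoeff α β (k - j) (k - m) = 0 := by
  obtain ⟨n, rfl⟩ := Nat.exists_eq_add_of_le' hm
  have hx : 2 * ((n : ℝ) + 1) < 2 * α + 2 * k + 2 := by
    have : ((n + 1 : ℕ) : ℝ) ≤ k := by exact_mod_cast hmk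
    push_cast at this
    linarith
  rw [sum_congr rfl fun j hj =>
      clInvCoeff_mul_clCoeff hα hβ (Nat.lt_succ_iff.mp (mem_range.mp hj)) hmk,
    ← mul_sum, sum_range_altGammaTerm_eq_zero hx, mul_zero]

theorem bcoef_clCoeff {α β : ℝ} (hα : -1 < α) (hβ : -1 < β) {k j : ℕ} (hjk : j ≤ k) :
    bcoef (clCoeff α β) k j = clInvCoeff α β k j :=
  bcoef_eq_of_sum_eq_zero _ k _ (clInvCoeff_zero hα hβ k) (fun n _ => clCoeff_self hα hβ n)
    (fun _ hm hmk => sum_clInvCoeff_mul_clCoeff_eq_zero hα hβ hm hmk) j hjk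

theorem bcoef_closed_form (α : ℝ) (hα : -1 < α) (k j : ℕ) (hjk : j ≤ k) :
    bcoef (aCL α) k j =
      (Nat.choose k j) * Real.Gamma (2 * α + k + 2) * Real.Gamma (α + k + 1) *
        Real.Gamma (2 * α + 2 * k + 3 - 2 * j) /
        (Real.Gamma (2 * α + k + 2 - j) * Real.Gamma (α + k + 1 - j) *
          Real.Gamma (2 * α + 2 * k + 3 - j)) ∧
    bcoef (ahCL α) k j =
      (Nat.choose k j) * Real.Gamma (2 * α + k + 2) * Real.Gamma (α + k + 2) *
        Real.Gamma (2 * α + 2 * k + 3 - 2 * j) /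
        (Real.Gamma (2 * α + k + 2 - j) * Real.Gamma (α + k + 2 - j) *
          Real.Gamma (2 * α + 2 * k + 3 - j)) := by
  have hshift : ∀ n : ℕ, α + 1 + n + 1 = α + n + 2 := fun n => by ring
  have hahCL : ahCL α = clCoeff α (α + 1) := by
    funext k j
    rw [ahCL, clCoeff, hshift, hshift]
  refine ⟨bcoef_clCoeff hα hα hjk, ?_⟩
  rw [hahCL, bcoef_clCoeff hα (by linarith) hjk, clInvCoeff, hshift]
end

section
/- Let α > −1 be real and let k ≥ 0 and i ≥ 1 be integers with i ≤ k. Then Σ_{j=0}^{i−1} (−1)^j C(i,j) (2α+2k+2−2j) Γ(2α+2k−i−j+2) / Γ(2α+2k+3−j) = (−1)^{i−1} Γ(2α+2k+3−2i) / Γ(2α+2k+3−i). -/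
/-! The summand is a forward difference `G j - G (j + 1)` of
`G j = (-1)^j C(i-1, j-1) Γ(x-i-j+3) / Γ(x+3-j)` (with `x = 2α + 2k`): after `Γ(s+1) = s Γ(s)`
and `C(i, j+1) (j+1) = C(i, j) (i-j)` this is the identity
`j (x-i-j+2) + (i-j) (x+2-j) = i (x+2-2j)`. The sum telescopes to `G 0 - G i = -G i`. -/

open Real

/-- `j C(i,j) / i` stands for `C(i-1, j-1)`, so that `gammaAntidiff x i 0 = 0` with no
truncated subtraction. -/
noncomputable def gammaAntidiff (x : ℝ) (i j : ℕ) : ℝ :=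
  (-1) ^ j * (j * i.choose j / i) * Gamma (x - i - j + 3) / Gamma (x + 3 - j)

lemma gammaAntidiff_zero (x : ℝ) (i : ℕ) : gammaAntidiff x i 0 = 0 := by
  simp [gammaAntidiff]

lemma gammaAntidiff_self (x : ℝ) {i : ℕ} (hi : i ≠ 0) :
    gammaAntidiff x i i = (-1) ^ i * Gamma (x + 3 - 2 * i) / Gamma (x + 3 - i) := by
  have hi' : (i : ℝ) ≠ 0 := Nat.cast_ne_zero.mpr hi
  rw [gammaAntidiff, Nat.choose_self, Nat.cast_one, mul_one, div_self hi', mul_one]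
  ring_nf

lemma cast_choose_succ_mul {R : Type*} [CommRing R] {i j : ℕ} (hj : j ≤ i) :
    (i.choose (j + 1) : R) * (j + 1) = i.choose j * (i - j) := by
  have h := congrArg (Nat.cast : ℕ → R) (Nat.choose_succ_right_eq i j)
  push_cast [Nat.cast_sub hj] at h
  exact h

lemma sub_gammaAntidiff_succ (x : ℝ) {i j : ℕ} (hj : j < i) (hx : 0 < x - i - j + 2) :
    gammaAntidiff x i j - gammaAntidiff x i (j + 1) =
      (-1) ^ j * i.choose j * (x + 2 - 2 * j) * Gamma (x - i - j + 2) / Gamma (x + 3 - j) := by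
  have hi : (i : ℝ) ≠ 0 := Nat.cast_ne_zero.mpr (Nat.ne_zero_of_lt hj)
  have hden : 0 < x + 2 - j := by linarith [(Nat.cast_nonneg i : (0 : ℝ) ≤ i)]
  have hnum_succ : Gamma (x - i - j + 3) = (x - i - j + 2) * Gamma (x - i - j + 2) := by
    rw [← Gamma_add_one hx.ne']; ring_nf
  have hden_succ : Gamma (x + 3 - j) = (x + 2 - j) * Gamma (x + 2 - j) := by
    rw [← Gamma_add_one hden.ne']; ring_nf
  have hchoose : (i.choose (j + 1) : ℝ) * (j + 1) = i.choose j * (i - j) :=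
    cast_choose_succ_mul hj.le
  have hΓ := (Gamma_pos_of_pos hden).ne'
  simp only [gammaAntidiff, Nat.cast_succ]
  rw [show x - i - (j + 1) + 3 = x - i - j + 2 by ring, show x + 3 - (j + 1) = x + 2 - j by ring,
    hnum_succ, hden_succ, pow_succ]
  field_simp
  linear_combination (x + 2 - j) * hchoose

theorem sum_range_neg_one_pow_mul_choose_mul_Gamma_div_Gamma (x : ℝ) {i : ℕ} (hi : i ≠ 0)
    (hx : 2 * i < x + 3) :
    ∑ j ∈ Finset.range i, (-1 : ℝ) ^ j * (i.choose j) * (x + 2 - 2 * j) *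
        Gamma (x - i - j + 2) / Gamma (x + 3 - j) =
      (-1 : ℝ) ^ (i - 1) * Gamma (x + 3 - 2 * i) / Gamma (x + 3 - i) := by
  have hterm : ∀ j ∈ Finset.range i, (-1 : ℝ) ^ j * (i.choose j) * (x + 2 - 2 * j) *
      Gamma (x - i - j + 2) / Gamma (x + 3 - j) =
        gammaAntidiff x i j - gammaAntidiff x i (j + 1) := by
    intro j hj
    have hj : (j : ℝ) + 1 ≤ i := by exact_mod_cast Finset.mem_range.mp hj
    exact (sub_gammaAntidiff_succ x (by exact_mod_cast hj) (by linarith)).symm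
  rw [Finset.sum_congr rfl hterm, Finset.sum_range_sub', gammaAntidiff_zero,
    gammaAntidiff_self x hi]
  obtain ⟨n, rfl⟩ := Nat.exists_eq_add_one_of_ne_zero hi
  rw [Nat.add_sub_cancel, pow_succ]
  ring

theorem gamma_sum_identity (α : ℝ) (hα : -1 < α) (k i : ℕ) (hi : 1 ≤ i) (hik : i ≤ k) :
    ∑ j ∈ Finset.range i, (-1 : ℝ) ^ j * (Nat.choose i j) * (2 * α + 2 * k + 2 - 2 * j) *
        Real.Gamma (2 * α + 2 * k - i - j + 2) / Real.Gamma (2 * α + 2 * k + 3 - j) =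
      (-1 : ℝ) ^ (i - 1) * Real.Gamma (2 * α + 2 * k + 3 - 2 * i) /
        Real.Gamma (2 * α + 2 * k + 3 - i) := by
  have hik' : (i : ℝ) ≤ k := by exact_mod_cast hik
  exact sum_range_neg_one_pow_mul_choose_mul_Gamma_div_Gamma (2 * α + 2 * k)
    (Nat.one_le_iff_ne_zero.mp hi) (by linarith)
end

section
/- With the Cauchy–Laguerre correlation kernels of parameter α > −1 and size m, for all x, z > 0 one has ∫_0^∞ K_{00}(x,y) K_{11}(z,y) dy = 0, and for all y, z > 0 one has ∫_0^∞ K_{00}(x,y) K_{11}(x,z) dx = 0. -/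
open MeasureTheory Real

/-- The monic Cauchy-Laguerre biorthogonal polynomial `p_k(x) = Σ_{j=0}^k a_{k,j} x^j`. -/
noncomputable def pCL (α : ℝ) (k : ℕ) (x : ℝ) : ℝ :=
  ∑ j ∈ Finset.range (k + 1), aCL α k j * x ^ j

/-- The monic Cauchy-Laguerre biorthogonal polynomial `q_k(y) = Σ_{j=0}^k â_{k,j} y^j`. -/
noncomputable def qCL (α : ℝ) (k : ℕ) (y : ℝ) : ℝ :=
  ∑ j ∈ Finset.range (k + 1), ahCL α k j * y ^ j

/-- Normalization `h_k = ∫∫ p_k(x) q_k(y) W(x,y) dx dy`. -/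
noncomputable def hCL (α : ℝ) (k : ℕ) : ℝ :=
  ∫ x in Set.Ioi (0:ℝ), ∫ y in Set.Ioi (0:ℝ), pCL α k x * qCL α k y * Wcl α x y

/-- The correlation kernel `K_{00}(x,y) = Σ_{k=0}^{m-1} p_k(x) q_k(y)/h_k`. -/
noncomputable def K00 (α : ℝ) (m : ℕ) (x y : ℝ) : ℝ :=
  ∑ k ∈ Finset.range m, pCL α k x * qCL α k y / hCL α k

/-- The correlation kernel `K_{01}`. -/
noncomputable def K01 (α : ℝ) (m : ℕ) (x y : ℝ) : ℝ :=
  x ^ α * Real.exp (-x) *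
    ∫ v in Set.Ioi (0:ℝ), v ^ (α + 1) * Real.exp (-v) * K00 α m y v / (x + v)

/-- The correlation kernel `K_{10}`. -/
noncomputable def K10 (α : ℝ) (m : ℕ) (x y : ℝ) : ℝ :=
  y ^ (α + 1) * Real.exp (-y) *
    ∫ w in Set.Ioi (0:ℝ), w ^ α * Real.exp (-w) * K00 α m w x / (y + w)

/-- The correlation kernel `K_{11}`. -/
noncomputable def K11 (α : ℝ) (m : ℕ) (x y : ℝ) : ℝ :=
  x ^ α * y ^ (α + 1) * Real.exp (-x - y) *
      (∫ v in Set.Ioi (0:ℝ), ∫ w in Set.Ioi (0:ℝ),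
        v ^ α * Real.exp (-v) * (w ^ (α + 1) * Real.exp (-w)) * K00 α m v w /
          ((y + v) * (x + w))) -
    Wcl α x y

/-!
The kernels are built from the Stieltjes transforms `P̃ₖ(s) = ∫ pₖ(v) v^α e^{-v} / (s + v) dv` and
`Q̃ₖ(t) = ∫ qₖ(w) w^{α+1} e^{-w} / (t + w) dw`: for `x, y > 0`,
`K₁₁(x, y) = x^α e^{-x} y^{α+1} e^{-y} (∑ₖ P̃ₖ(y) Q̃ₖ(x) / hₖ - 1 / (x + y))`.
Integrating `qₖ(y) K₁₁(z, y)` in `y` gives `z^α e^{-z} (∑ₗ Q̃ₗ(z) ⟨pₗ, qₖ⟩ / hₗ - Q̃ₖ(z))`, where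
`⟨p, q⟩ = ∫∫ p(x) q(y) W(x, y)`, and this vanishes by biorthogonality `⟨pₗ, qₖ⟩ = δₗₖ hₖ`; the
second identity is the same computation with the roles of `p` and `q` exchanged.

Biorthogonality comes from the bimoments
`∫∫ x^a y^b e^{-x-y} / (x + y) = Γ(a+1) Γ(b+1) / (a + b + 1)`, obtained from
`1 / (s + t) = ∫₀^∞ e^{-(s+t) r} dr` and Fubini. With `c = 2α + 2`, `⟨pₖ, qₗ⟩` is then a multiple
of `∑ᵢ ∑ⱼ wₖ(i) wₗ(j) / (c + i + j)`, where
`wₙ(i) = (-1)^(n-i) (n choose i) (c + i)(c + i + 1)⋯(c + i + n - 1)`.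
For `i < l` the map `x ↦ (c + x)⋯(c + x + l - 1) / (c + x + i)` is a polynomial of degree `< l`,
so its `l`-th forward difference `∑ⱼ wₗ(j) / (c + i + j)` vanishes.
-/

open Set Filter Polynomial

lemma exp_neg_sub (x y : ℝ) : exp (-x - y) = exp (-x) * exp (-y) := by
  rw [sub_eq_add_neg, exp_add]

lemma integrable_prod_of_nonneg {X Y : Type*} [MeasurableSpace X] [MeasurableSpace Y]
    {μ : Measure X} {ν : Measure Y} [SFinite ν] {f : X × Y → ℝ}
    (hf : AEStronglyMeasurable f (μ.prod ν)) (h0 : ∀ᵐ x ∂μ, 0 ≤ᵐ[ν] fun y => f (x, y))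
    (hslice : ∀ᵐ x ∂μ, Integrable (fun y => f (x, y)) ν)
    (hint : Integrable (fun x => ∫ y, f (x, y) ∂ν) μ) :
    Integrable f (μ.prod ν) :=
  (integrable_prod_iff hf).2 ⟨hslice, hint.congr <| h0.mono fun _ hx =>
    integral_congr_ae <| hx.mono fun _ hy => (norm_of_nonneg hy).symm⟩

lemma integrableOn_rpow_mul_exp_neg_mul {a c : ℝ} (ha : -1 < a) (hc : 0 < c) :
    IntegrableOn (fun t : ℝ => t ^ a * exp (-(c * t))) (Ioi 0) := by
  simpa [neg_mul] using integrableOn_rpow_mul_exp_neg_mul_rpow ha one_pos hc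

lemma integral_rpow_mul_exp_neg_mul {a c : ℝ} (ha : -1 < a) (hc : 0 < c) :
    ∫ t in Ioi 0, t ^ a * exp (-(c * t)) = Gamma (a + 1) * c ^ (-(a + 1)) := by
  have := integral_rpow_mul_exp_neg_mul_Ioi (a := a + 1) (by linarith) hc
  rw [add_sub_cancel_right] at this
  rw [this, one_div, inv_rpow hc.le, rpow_neg hc.le, mul_comm]

lemma integrableOn_rpow_mul_exp_neg {a : ℝ} (ha : -1 < a) :
    IntegrableOn (fun t : ℝ => t ^ a * exp (-t)) (Ioi 0) := by
  simpa using integrableOn_rpow_mul_exp_neg_mul ha one_pos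

lemma integral_exp_neg_mul {c : ℝ} (hc : 0 < c) : ∫ t in Ioi 0, exp (-(c * t)) = c⁻¹ := by
  simpa [rpow_neg_one] using integral_rpow_mul_exp_neg_mul (a := 0) (by norm_num) hc

lemma integrableOn_exp_neg_mul {c : ℝ} (hc : 0 < c) :
    IntegrableOn (fun t : ℝ => exp (-(c * t))) (Ioi 0) := by
  simpa using integrableOn_rpow_mul_exp_neg_mul (a := 0) (by norm_num) hc

lemma integral_Ioi_add_one_rpow {p : ℝ} (hp : p < -1) :
    ∫ r in Ioi (0 : ℝ), (r + 1) ^ p = -(p + 1)⁻¹ := by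
  have hp' : p + 1 ≠ 0 := by linarith
  have hderiv : ∀ r ∈ Ici (0 : ℝ),
      HasDerivAt (fun r => (r + 1) ^ (p + 1) / (p + 1)) ((r + 1) ^ p) r := by
    intro r hr
    refine ((((hasDerivAt_id' r).add_const 1).rpow_const (p := p + 1)
      (Or.inl (by linarith [mem_Ici.mp hr]))).div_const (p + 1)).congr_deriv ?_
    rw [add_sub_cancel_right]
    field_simp
  have hlim : Tendsto (fun r : ℝ => (r + 1) ^ (p + 1) / (p + 1)) atTop (nhds (0 / (p + 1))) := by
    rw [← neg_neg (p + 1)]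
    exact ((tendsto_rpow_neg_atTop (by linarith)).comp
      (tendsto_atTop_add_const_right _ 1 tendsto_id)).div_const _
  rw [integral_Ioi_of_hasDerivAt_of_tendsto' hderiv
    (integrableOn_add_rpow_Ioi_of_lt hp (by norm_num)) hlim]
  simp

noncomputable def stieltjesGamma (a s : ℝ) : ℝ := ∫ t in Ioi 0, t ^ a * exp (-t) / (s + t)

lemma integrableOn_rpow_mul_exp_neg_div_add {a s : ℝ} (ha : -1 < a) (hs : 0 < s) :
    IntegrableOn (fun t : ℝ => t ^ a * exp (-t) / (s + t)) (Ioi 0) := by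
  refine ((integrableOn_rpow_mul_exp_neg ha).div_const s).mono'
    (by fun_prop : Measurable _).aestronglyMeasurable ?_
  filter_upwards [ae_restrict_mem measurableSet_Ioi] with t (ht : 0 < t)
  rw [norm_of_nonneg (by positivity)]
  exact div_le_div_of_nonneg_left (by positivity) hs (by linarith)

lemma stieltjesGamma_eq_integral_exp {a s : ℝ} (ha : -1 < a) (hs : 0 < s) :
    stieltjesGamma a s = Gamma (a + 1) * ∫ r in Ioi 0, exp (-(s * r)) * (r + 1) ^ (-(a + 1)) := by
  set F : ℝ → ℝ → ℝ := fun u r => u ^ a * exp (-u) * exp (-((s + u) * r))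
  have hslice : ∀ u ∈ Ioi (0 : ℝ), ∫ r in Ioi 0, F u r = u ^ a * exp (-u) / (s + u) := by
    intro u (hu : 0 < u)
    rw [integral_const_mul, integral_exp_neg_mul (by linarith), div_eq_mul_inv]
  have hint : Integrable (Function.uncurry F)
      ((volume.restrict (Ioi 0)).prod (volume.restrict (Ioi 0))) := by
    refine integrable_prod_of_nonneg (by fun_prop) ?_ ?_ ?_
    · filter_upwards [ae_restrict_mem measurableSet_Ioi] with u (hu : 0 < u)
      exact .of_forall fun r => by dsimp; positivity
    · filter_upwards [ae_restrict_mem measurableSet_Ioi] with u (hu : 0 < u)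
      exact (integrableOn_exp_neg_mul (by linarith : 0 < s + u)).const_mul (u ^ a * exp (-u))
    · exact (integrableOn_rpow_mul_exp_neg_div_add ha hs).congr_fun
        (fun u hu => (hslice u hu).symm) measurableSet_Ioi
  rw [stieltjesGamma, ← setIntegral_congr_fun measurableSet_Ioi hslice,
    integral_integral_swap hint, ← integral_const_mul]
  refine setIntegral_congr_fun measurableSet_Ioi fun r (hr : 0 < r) => ?_
  have hexp : ∀ u, F u r = exp (-(s * r)) * (u ^ a * exp (-((r + 1) * u))) := fun u => by
    simp only [F]
    rw [mul_assoc, ← exp_add, mul_left_comm, ← exp_add]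
    ring_nf
  simp only [hexp, integral_const_mul, integral_rpow_mul_exp_neg_mul ha (by linarith : 0 < r + 1)]
  ring

noncomputable def laplaceKernel (a b r t : ℝ) : ℝ :=
  t ^ b * exp (-t) * (exp (-(t * r)) * (r + 1) ^ (-(a + 1)))

lemma laplaceKernel_eq (a b r t : ℝ) :
    laplaceKernel a b r t = t ^ b * exp (-((r + 1) * t)) * (r + 1) ^ (-(a + 1)) := by
  rw [laplaceKernel, show exp (-((r + 1) * t)) = exp (-t) * exp (-(t * r)) by
    rw [← exp_add]; ring_nf]
  ring

lemma integral_laplaceKernel {a b r : ℝ} (hb : -1 < b) (hr : 0 < r) :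
    ∫ t in Ioi 0, laplaceKernel a b r t = Gamma (b + 1) * (r + 1) ^ (-(a + b + 2)) := by
  simp only [laplaceKernel_eq]
  rw [integral_mul_const, integral_rpow_mul_exp_neg_mul hb (by linarith), mul_assoc,
    ← rpow_add (by linarith)]
  ring_nf

lemma integrable_laplaceKernel {a b : ℝ} (hb : -1 < b) (hab : 0 < a + b + 1) :
    Integrable (Function.uncurry (laplaceKernel a b))
      ((volume.restrict (Ioi 0)).prod (volume.restrict (Ioi 0))) := by
  refine integrable_prod_of_nonneg (by unfold laplaceKernel; fun_prop) ?_ ?_ ?_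
  · filter_upwards [ae_restrict_mem measurableSet_Ioi] with r (hr : 0 < r)
    filter_upwards [ae_restrict_mem measurableSet_Ioi] with t (ht : 0 < t)
    dsimp [laplaceKernel]
    positivity
  · filter_upwards [ae_restrict_mem measurableSet_Ioi] with r (hr : 0 < r)
    simp only [Function.uncurry_apply_pair, laplaceKernel_eq]
    exact (integrableOn_rpow_mul_exp_neg_mul hb (by linarith : 0 < r + 1)).mul_const _
  · exact IntegrableOn.congr_fun ((integrableOn_add_rpow_Ioi_of_lt
      (by linarith : -(a + b + 2) < -1) (by norm_num : -(1 : ℝ) < 0)).const_mul _)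
      (fun r hr => (integral_laplaceKernel hb hr).symm) measurableSet_Ioi

lemma rpow_mul_exp_neg_mul_stieltjesGamma_eq_integral {a b t : ℝ} (ha : -1 < a) (ht : 0 < t) :
    t ^ b * exp (-t) * stieltjesGamma a t =
      Gamma (a + 1) * ∫ r in Ioi 0, laplaceKernel a b r t := by
  simp only [stieltjesGamma_eq_integral_exp ha ht, laplaceKernel, integral_const_mul, mul_comm t]
  ring

lemma integrableOn_rpow_mul_exp_neg_mul_stieltjesGamma {a b : ℝ} (ha : -1 < a) (hb : -1 < b)
    (hab : 0 < a + b + 1) :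
    IntegrableOn (fun t => t ^ b * exp (-t) * stieltjesGamma a t) (Ioi 0) :=
  IntegrableOn.congr_fun ((integrable_laplaceKernel hb hab).integral_prod_right.const_mul _)
    (fun _ ht => (rpow_mul_exp_neg_mul_stieltjesGamma_eq_integral ha ht).symm) measurableSet_Ioi

lemma integral_rpow_mul_exp_neg_mul_stieltjesGamma {a b : ℝ} (ha : -1 < a) (hb : -1 < b)
    (hab : 0 < a + b + 1) :
    ∫ t in Ioi 0, t ^ b * exp (-t) * stieltjesGamma a t
      = Gamma (a + 1) * Gamma (b + 1) / (a + b + 1) := by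
  rw [setIntegral_congr_fun measurableSet_Ioi fun _ ht =>
      rpow_mul_exp_neg_mul_stieltjesGamma_eq_integral ha ht, integral_const_mul,
    ← integral_integral_swap (integrable_laplaceKernel hb hab),
    setIntegral_congr_fun measurableSet_Ioi fun _ hr => integral_laplaceKernel hb hr,
    integral_const_mul, integral_Ioi_add_one_rpow (by linarith),
    show -(a + b + 2) + 1 = -(a + b + 1) by ring, inv_neg, neg_neg]
  ring

lemma neg_one_lt_add_natCast {e : ℝ} (he : -1 < e) (i : ℕ) : -1 < e + i := by
  linarith [(i.cast_nonneg : (0 : ℝ) ≤ i)]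

noncomputable def weightedPoly (c : ℕ → ℝ) (n : ℕ) (e y : ℝ) : ℝ :=
  (∑ i ∈ Finset.range n, c i * y ^ i) * (y ^ e * exp (-y))

noncomputable def stieltjesPoly (c : ℕ → ℝ) (n : ℕ) (e s : ℝ) : ℝ :=
  ∫ y in Ioi 0, weightedPoly c n e y / (s + y)

section WeightedPoly

variable {c d : ℕ → ℝ} {n n' : ℕ} {e f : ℝ}

lemma weightedPoly_mul_eq_sum {y : ℝ} (hy : 0 < y) (g : ℝ) :
    weightedPoly c n e y * g = ∑ i ∈ Finset.range n, c i * (y ^ (e + i) * exp (-y) * g) := by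
  rw [weightedPoly, Finset.sum_mul, Finset.sum_mul]
  refine Finset.sum_congr rfl fun i _ => ?_
  rw [rpow_add hy, rpow_natCast]
  ring

lemma integrableOn_weightedPoly_mul {g : ℝ → ℝ}
    (hg : ∀ i : ℕ, IntegrableOn (fun y => y ^ (e + i) * exp (-y) * g y) (Ioi 0)) :
    IntegrableOn (fun y => weightedPoly c n e y * g y) (Ioi 0) :=
  IntegrableOn.congr_fun (integrable_finsetSum _ fun i _ => (hg i).const_mul (c i))
    (fun _ hy => (weightedPoly_mul_eq_sum hy _).symm) measurableSet_Ioi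

lemma integral_weightedPoly_mul {g : ℝ → ℝ}
    (hg : ∀ i : ℕ, IntegrableOn (fun y => y ^ (e + i) * exp (-y) * g y) (Ioi 0)) :
    ∫ y in Ioi 0, weightedPoly c n e y * g y
      = ∑ i ∈ Finset.range n, c i * ∫ y in Ioi 0, y ^ (e + i) * exp (-y) * g y := by
  rw [setIntegral_congr_fun measurableSet_Ioi fun _ hy => weightedPoly_mul_eq_sum hy _,
    integral_finsetSum _ fun i _ => (hg i).const_mul (c i)]
  simp_rw [integral_const_mul]

lemma integrableOn_weightedPoly_div_add (he : -1 < e) {s : ℝ} (hs : 0 < s) :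
    IntegrableOn (fun y => weightedPoly c n e y / (s + y)) (Ioi 0) := by
  simp_rw [div_eq_mul_inv]
  exact integrableOn_weightedPoly_mul fun i => by
    simpa only [div_eq_mul_inv] using
      integrableOn_rpow_mul_exp_neg_div_add (neg_one_lt_add_natCast he i) hs

lemma stieltjesPoly_eq_sum (he : -1 < e) {s : ℝ} (hs : 0 < s) :
    stieltjesPoly c n e s = ∑ i ∈ Finset.range n, c i * stieltjesGamma (e + i) s := by
  simp_rw [stieltjesPoly, stieltjesGamma, div_eq_mul_inv]
  exact integral_weightedPoly_mul fun i => by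
    simpa only [div_eq_mul_inv] using
      integrableOn_rpow_mul_exp_neg_div_add (neg_one_lt_add_natCast he i) hs

lemma weightedPoly_mul_stieltjesPoly_eq_sum (he : -1 < e) {y : ℝ} (hy : 0 < y) :
    weightedPoly d n' f y * stieltjesPoly c n e y
      = ∑ i ∈ Finset.range n, c i * (weightedPoly d n' f y * stieltjesGamma (e + i) y) := by
  rw [stieltjesPoly_eq_sum he hy, Finset.mul_sum]
  exact Finset.sum_congr rfl fun i _ => by ring

lemma integrableOn_rpow_mul_exp_neg_mul_stieltjesGamma_add_natCast (he : -1 < e)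
    (hf : -1 < f) (hef : 0 < e + f + 1) (i j : ℕ) :
    IntegrableOn (fun y => y ^ (f + j) * exp (-y) * stieltjesGamma (e + i) y) (Ioi 0) :=
  integrableOn_rpow_mul_exp_neg_mul_stieltjesGamma (neg_one_lt_add_natCast he i)
    (neg_one_lt_add_natCast hf j) (by linarith [(i.cast_nonneg : (0 : ℝ) ≤ i),
      (j.cast_nonneg : (0 : ℝ) ≤ j)])

lemma integrableOn_weightedPoly_mul_stieltjesPoly (he : -1 < e) (hf : -1 < f)
    (hef : 0 < e + f + 1) :
    IntegrableOn (fun y => weightedPoly d n' f y * stieltjesPoly c n e y) (Ioi 0) :=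
  IntegrableOn.congr_fun (integrable_finsetSum _ fun i _ => (integrableOn_weightedPoly_mul
      (integrableOn_rpow_mul_exp_neg_mul_stieltjesGamma_add_natCast he hf hef i)).const_mul (c i))
    (fun _ hy => (weightedPoly_mul_stieltjesPoly_eq_sum he hy).symm) measurableSet_Ioi

lemma integral_weightedPoly_mul_stieltjesPoly (he : -1 < e) (hf : -1 < f)
    (hef : 0 < e + f + 1) :
    ∫ y in Ioi 0, weightedPoly d n' f y * stieltjesPoly c n e y
      = ∑ i ∈ Finset.range n, ∑ j ∈ Finset.range n', c i * d j *
          (Gamma (e + i + 1) * Gamma (f + j + 1) / (e + i + (f + j) + 1)) := by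
  rw [setIntegral_congr_fun measurableSet_Ioi fun _ hy =>
      weightedPoly_mul_stieltjesPoly_eq_sum he hy,
    integral_finsetSum _ fun i _ => (integrableOn_weightedPoly_mul
      (integrableOn_rpow_mul_exp_neg_mul_stieltjesGamma_add_natCast he hf hef i)).const_mul (c i)]
  refine Finset.sum_congr rfl fun i _ => ?_
  rw [integral_const_mul, integral_weightedPoly_mul
      (integrableOn_rpow_mul_exp_neg_mul_stieltjesGamma_add_natCast he hf hef i), Finset.mul_sum]
  refine Finset.sum_congr rfl fun j _ => ?_
  rw [integral_rpow_mul_exp_neg_mul_stieltjesGamma (neg_one_lt_add_natCast he i)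
    (neg_one_lt_add_natCast hf j) (by linarith [(i.cast_nonneg : (0 : ℝ) ≤ i),
      (j.cast_nonneg : (0 : ℝ) ≤ j)])]
  ring

end WeightedPoly

lemma Gamma_add_nat_eq_prod_mul {x : ℝ} (hx : 0 < x) (n : ℕ) :
    Gamma (x + n) = (∏ r ∈ Finset.range n, (x + r)) * Gamma x := by
  induction n with
  | zero => simp
  | succ n ih =>
    rw [Nat.cast_succ, ← add_assoc, Gamma_add_one (by positivity), ih, Finset.prod_range_succ]
    ring

-- `∑ j ∈ Finset.range (n + 1), diffWeight c n j * g j` is the `n`-th forward difference at `0`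
-- of `x ↦ (c + x) (c + x + 1) ⋯ (c + x + n - 1) * g x`.
noncomputable def diffWeight (c : ℝ) (n i : ℕ) : ℝ :=
  (-1) ^ (n - i) * n.choose i * ∏ r ∈ Finset.range n, (c + i + r)

lemma sum_diffWeight_div_eq_zero {c : ℝ} (hc : 0 < c) {n d : ℕ} (hd : d < n) :
    ∑ j ∈ Finset.range (n + 1), diffWeight c n j / (c + j + d) = 0 := by
  set Q : ℝ[X] := ∏ r ∈ (Finset.range n).erase d, (X + C (c + r))
  have hQ : Q.natDegree < n := by
    refine (natDegree_prod_le _ _).trans_lt ?_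
    simp only [natDegree_X_add_C, Finset.sum_const, smul_eq_mul, mul_one]
    rw [Finset.card_erase_of_mem (Finset.mem_range.2 hd), Finset.card_range]
    omega
  have heval : ∀ j : ℕ, (∏ r ∈ Finset.range n, (c + j + r)) / (c + j + d) = Q.eval (j : ℝ) := by
    intro j
    have hpos : 0 < c + j + d := by positivity
    rw [← Finset.mul_prod_erase _ _ (Finset.mem_range.2 hd), mul_div_cancel_left₀ _ hpos.ne',
      eval_prod]
    refine Finset.prod_congr rfl fun r _ => ?_
    simp only [eval_add, eval_X, eval_C]
    ring
  have hdiff := congr_fun (Polynomial.fwdDiff_iter_eq_zero_of_degree_lt hQ) 0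
  rw [fwdDiff_iter_eq_sum_shift, Pi.zero_apply] at hdiff
  rw [← hdiff]
  refine Finset.sum_congr rfl fun j _ => ?_
  rw [diffWeight, mul_div_assoc, heval]
  simp

lemma sum_sum_diffWeight_div_eq_zero_of_lt {c : ℝ} (hc : 0 < c) {k l : ℕ} (hkl : k < l) :
    ∑ i ∈ Finset.range (k + 1), ∑ j ∈ Finset.range (l + 1),
      diffWeight c k i * diffWeight c l j / (c + i + j) = 0 := by
  refine Finset.sum_eq_zero fun i hi => ?_
  have hil : i < l := by rw [Finset.mem_range] at hi; omega
  simp_rw [mul_div_assoc, ← Finset.mul_sum, add_right_comm c (i : ℝ)]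
  rw [sum_diffWeight_div_eq_zero hc hil, mul_zero]

lemma sum_sum_diffWeight_div_eq_zero {c : ℝ} (hc : 0 < c) {k l : ℕ} (hkl : k ≠ l) :
    ∑ i ∈ Finset.range (k + 1), ∑ j ∈ Finset.range (l + 1),
      diffWeight c k i * diffWeight c l j / (c + i + j) = 0 := by
  rcases hkl.lt_or_gt with hkl | hlk
  · exact sum_sum_diffWeight_div_eq_zero_of_lt hc hkl
  · rw [Finset.sum_comm, ← sum_sum_diffWeight_div_eq_zero_of_lt hc hlk]
    simp_rw [mul_comm (diffWeight c k _), add_right_comm c]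

noncomputable def clPairing (α : ℝ) (k l : ℕ) : ℝ :=
  ∫ x in Ioi 0, ∫ y in Ioi 0, pCL α k x * qCL α l y * Wcl α x y

section CauchyLaguerre

variable {α : ℝ}

lemma aCL_mul_Gamma (hα : -1 < α) (k i : ℕ) :
    aCL α k i * Gamma (α + i + 1) = Gamma (2 * α + k + 2) * Gamma (α + k + 1) /
      Gamma (2 * α + 2 * k + 2) * diffWeight (2 * α + 2) k i := by
  have hi : (0 : ℝ) ≤ i := i.cast_nonneg
  have hk : (0 : ℝ) ≤ k := k.cast_nonneg
  have hΓ : Gamma (2 * α + k + i + 2) = (∏ r ∈ Finset.range k, (2 * α + 2 + i + r)) *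
      Gamma (2 * α + i + 2) := by
    rw [show 2 * α + i + 2 = 2 * α + 2 + i by ring,
      ← Gamma_add_nat_eq_prod_mul (by linarith)]
    ring_nf
  have h1 : Gamma (2 * α + i + 2) ≠ 0 := (Gamma_pos_of_pos (by linarith)).ne'
  have h2 : Gamma (α + i + 1) ≠ 0 := (Gamma_pos_of_pos (by linarith)).ne'
  have h3 : Gamma (2 * α + 2 * k + 2) ≠ 0 := (Gamma_pos_of_pos (by linarith)).ne'
  rw [aCL, diffWeight, hΓ]
  field_simp

lemma ahCL_mul_Gamma (hα : -1 < α) (l j : ℕ) :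
    ahCL α l j * Gamma (α + j + 2) = Gamma (2 * α + l + 2) * Gamma (α + l + 2) /
      Gamma (2 * α + 2 * l + 2) * diffWeight (2 * α + 2) l j := by
  have hj : (0 : ℝ) ≤ j := j.cast_nonneg
  have hl : (0 : ℝ) ≤ l := l.cast_nonneg
  have hΓ : Gamma (2 * α + l + j + 2) = (∏ r ∈ Finset.range l, (2 * α + 2 + j + r)) *
      Gamma (2 * α + j + 2) := by
    rw [show 2 * α + j + 2 = 2 * α + 2 + j by ring,
      ← Gamma_add_nat_eq_prod_mul (by linarith)]
    ring_nf
  have h1 : Gamma (2 * α + j + 2) ≠ 0 := (Gamma_pos_of_pos (by linarith)).ne'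
  have h2 : Gamma (α + j + 2) ≠ 0 := (Gamma_pos_of_pos (by linarith)).ne'
  have h3 : Gamma (2 * α + 2 * l + 2) ≠ 0 := (Gamma_pos_of_pos (by linarith)).ne'
  rw [ahCL, diffWeight, hΓ]
  field_simp

lemma weightedPoly_aCL (k : ℕ) (x : ℝ) :
    weightedPoly (aCL α k) (k + 1) α x = pCL α k x * (x ^ α * exp (-x)) := rfl

lemma weightedPoly_ahCL (k : ℕ) (y : ℝ) :
    weightedPoly (ahCL α k) (k + 1) (α + 1) y = qCL α k y * (y ^ (α + 1) * exp (-y)) := rfl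

lemma clPairing_self (k : ℕ) : clPairing α k k = hCL α k := rfl

lemma clPairing_eq_integral (k l : ℕ) :
    clPairing α k l = ∫ x in Ioi 0,
      weightedPoly (aCL α k) (k + 1) α x * stieltjesPoly (ahCL α l) (l + 1) (α + 1) x := by
  refine setIntegral_congr_fun measurableSet_Ioi fun x _ => ?_
  rw [stieltjesPoly, ← integral_const_mul]
  refine setIntegral_congr_fun measurableSet_Ioi fun y _ => ?_
  rw [weightedPoly_aCL, weightedPoly_ahCL, Wcl, exp_neg_sub]
  ring

lemma clPairing_eq_sum (hα : -1 < α) (k l : ℕ) :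
    clPairing α k l = ∑ i ∈ Finset.range (k + 1), ∑ j ∈ Finset.range (l + 1),
      aCL α k i * Gamma (α + i + 1) * (ahCL α l j * Gamma (α + j + 2)) / (2 * α + 2 + i + j) := by
  rw [clPairing_eq_integral, integral_weightedPoly_mul_stieltjesPoly (by linarith) hα
    (by linarith), Finset.sum_comm]
  refine Finset.sum_congr rfl fun i _ => Finset.sum_congr rfl fun j _ => ?_
  rw [show α + 1 + j + 1 = α + j + 2 by ring,
    show α + 1 + j + (α + i) + 1 = 2 * α + 2 + i + j by ring]
  ring

lemma integral_weightedPoly_ahCL_mul_stieltjesPoly (hα : -1 < α) (k l : ℕ) :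
    ∫ y in Ioi 0, weightedPoly (ahCL α l) (l + 1) (α + 1) y * stieltjesPoly (aCL α k) (k + 1) α y
      = clPairing α k l := by
  rw [clPairing_eq_sum hα, integral_weightedPoly_mul_stieltjesPoly hα (by linarith)
    (by linarith)]
  refine Finset.sum_congr rfl fun i _ => Finset.sum_congr rfl fun j _ => ?_
  rw [show α + 1 + j + 1 = α + j + 2 by ring,
    show α + i + (α + 1 + j) + 1 = 2 * α + 2 + i + j by ring]
  ring

lemma clPairing_eq_zero (hα : -1 < α) {k l : ℕ} (hkl : k ≠ l) : clPairing α k l = 0 := by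
  rw [clPairing_eq_sum hα, ← mul_zero (Gamma (2 * α + k + 2) * Gamma (α + k + 1) /
      Gamma (2 * α + 2 * k + 2) * (Gamma (2 * α + l + 2) * Gamma (α + l + 2) /
      Gamma (2 * α + 2 * l + 2))),
    ← sum_sum_diffWeight_div_eq_zero (by linarith : 0 < 2 * α + 2) hkl, Finset.mul_sum]
  refine Finset.sum_congr rfl fun i _ => ?_
  rw [Finset.mul_sum]
  refine Finset.sum_congr rfl fun j _ => ?_
  rw [aCL_mul_Gamma hα, ahCL_mul_Gamma hα]
  ring

end CauchyLaguerre

section Kernels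

variable {α : ℝ}

lemma integral_integral_K00_div (hα : -1 < α) (m : ℕ) {s t : ℝ} (hs : 0 < s) (ht : 0 < t) :
    ∫ v in Ioi 0, ∫ w in Ioi 0, v ^ α * exp (-v) * (w ^ (α + 1) * exp (-w)) * K00 α m v w /
        ((s + v) * (t + w))
      = ∑ k ∈ Finset.range m, stieltjesPoly (aCL α k) (k + 1) α s *
          stieltjesPoly (ahCL α k) (k + 1) (α + 1) t / hCL α k := by
  have hinner : ∀ v, ∫ w in Ioi 0, v ^ α * exp (-v) * (w ^ (α + 1) * exp (-w)) * K00 α m v w /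
        ((s + v) * (t + w))
      = ∑ k ∈ Finset.range m, stieltjesPoly (ahCL α k) (k + 1) (α + 1) t / hCL α k *
          (weightedPoly (aCL α k) (k + 1) α v / (s + v)) := by
    intro v
    have hsum : ∀ w, v ^ α * exp (-v) * (w ^ (α + 1) * exp (-w)) * K00 α m v w /
        ((s + v) * (t + w)) = ∑ k ∈ Finset.range m, weightedPoly (aCL α k) (k + 1) α v /
          (s + v) / hCL α k * (weightedPoly (ahCL α k) (k + 1) (α + 1) w / (t + w)) := by
      intro w
      simp only [K00, Finset.mul_sum, Finset.sum_div, weightedPoly_aCL, weightedPoly_ahCL]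
      exact Finset.sum_congr rfl fun k _ => by rw [mul_comm (s + v)]; field_simp
    simp only [hsum]
    rw [integral_finsetSum _ fun k _ =>
      (integrableOn_weightedPoly_div_add (by linarith) ht).const_mul _]
    refine Finset.sum_congr rfl fun k _ => ?_
    rw [integral_const_mul, ← stieltjesPoly]
    ring
  simp only [hinner]
  rw [integral_finsetSum _ fun k _ => (integrableOn_weightedPoly_div_add hα hs).const_mul _]
  refine Finset.sum_congr rfl fun k _ => ?_
  rw [integral_const_mul, ← stieltjesPoly]
  ring

lemma K11_eq (hα : -1 < α) (m : ℕ) {x y : ℝ} (hx : 0 < x) (hy : 0 < y) :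
    K11 α m x y = x ^ α * exp (-x) * (y ^ (α + 1) * exp (-y)) *
      (∑ k ∈ Finset.range m, stieltjesPoly (aCL α k) (k + 1) α y *
        stieltjesPoly (ahCL α k) (k + 1) (α + 1) x / hCL α k - (x + y)⁻¹) := by
  rw [K11, integral_integral_K00_div hα m hy hx, Wcl, exp_neg_sub]
  ring

end Kernels

section Reproducing

variable {α : ℝ} {m k : ℕ} {z : ℝ}

lemma qCL_mul_K11_eq (hα : -1 < α) (hz : 0 < z) {y : ℝ} (hy : 0 < y) :
    qCL α k y * K11 α m z y = z ^ α * exp (-z) *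
      (∑ l ∈ Finset.range m, stieltjesPoly (ahCL α l) (l + 1) (α + 1) z / hCL α l *
        (weightedPoly (ahCL α k) (k + 1) (α + 1) y * stieltjesPoly (aCL α l) (l + 1) α y) -
      weightedPoly (ahCL α k) (k + 1) (α + 1) y / (z + y)) := by
  rw [K11_eq hα m hz hy]
  simp only [weightedPoly_ahCL, mul_sub, Finset.mul_sum]
  congr 1
  · exact Finset.sum_congr rfl fun l _ => by ring
  · ring

lemma integrableOn_qCL_mul_K11 (hα : -1 < α) (hz : 0 < z) :
    IntegrableOn (fun y => qCL α k y * K11 α m z y) (Ioi 0) :=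
  IntegrableOn.congr_fun (Integrable.const_mul (Integrable.sub
      (integrable_finsetSum _ fun _ _ => Integrable.const_mul
        (integrableOn_weightedPoly_mul_stieltjesPoly hα (by linarith) (by linarith)) _)
      (integrableOn_weightedPoly_div_add (by linarith) hz)) _)
    (fun _ hy => (qCL_mul_K11_eq hα hz hy).symm) measurableSet_Ioi

lemma integral_qCL_mul_K11 (hα : -1 < α) (hk : k ∈ Finset.range m) (hh : hCL α k ≠ 0)
    (hz : 0 < z) : ∫ y in Ioi 0, qCL α k y * K11 α m z y = 0 := by
  rw [setIntegral_congr_fun measurableSet_Ioi fun _ hy => qCL_mul_K11_eq hα hz hy,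
    integral_const_mul, integral_sub (integrable_finsetSum _ fun _ _ => Integrable.const_mul
        (integrableOn_weightedPoly_mul_stieltjesPoly hα (by linarith) (by linarith)) _)
      (integrableOn_weightedPoly_div_add (by linarith) hz),
    integral_finsetSum _ fun _ _ => Integrable.const_mul
        (integrableOn_weightedPoly_mul_stieltjesPoly hα (by linarith) (by linarith)) _]
  simp_rw [integral_const_mul, integral_weightedPoly_ahCL_mul_stieltjesPoly hα]
  rw [Finset.sum_eq_single_of_mem k hk fun l _ hl => by rw [clPairing_eq_zero hα hl, mul_zero],
    clPairing_self, div_mul_cancel₀ _ hh, ← stieltjesPoly, sub_self, mul_zero]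

lemma pCL_mul_K11_eq (hα : -1 < α) (hz : 0 < z) {x : ℝ} (hx : 0 < x) :
    pCL α k x * K11 α m x z = z ^ (α + 1) * exp (-z) *
      (∑ l ∈ Finset.range m, stieltjesPoly (aCL α l) (l + 1) α z / hCL α l *
        (weightedPoly (aCL α k) (k + 1) α x * stieltjesPoly (ahCL α l) (l + 1) (α + 1) x) -
      weightedPoly (aCL α k) (k + 1) α x / (z + x)) := by
  rw [K11_eq hα m hx hz, add_comm z]
  simp only [weightedPoly_aCL, mul_sub, Finset.mul_sum]
  congr 1
  · exact Finset.sum_congr rfl fun l _ => by ring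
  · ring

lemma integrableOn_pCL_mul_K11 (hα : -1 < α) (hz : 0 < z) :
    IntegrableOn (fun x => pCL α k x * K11 α m x z) (Ioi 0) :=
  IntegrableOn.congr_fun (Integrable.const_mul (Integrable.sub
      (integrable_finsetSum _ fun _ _ => Integrable.const_mul
        (integrableOn_weightedPoly_mul_stieltjesPoly (by linarith) hα (by linarith)) _)
      (integrableOn_weightedPoly_div_add hα hz)) _)
    (fun _ hx => (pCL_mul_K11_eq hα hz hx).symm) measurableSet_Ioi

lemma integral_pCL_mul_K11 (hα : -1 < α) (hk : k ∈ Finset.range m) (hh : hCL α k ≠ 0)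
    (hz : 0 < z) : ∫ x in Ioi 0, pCL α k x * K11 α m x z = 0 := by
  rw [setIntegral_congr_fun measurableSet_Ioi fun _ hx => pCL_mul_K11_eq hα hz hx,
    integral_const_mul, integral_sub (integrable_finsetSum _ fun _ _ => Integrable.const_mul
        (integrableOn_weightedPoly_mul_stieltjesPoly (by linarith) hα (by linarith)) _)
      (integrableOn_weightedPoly_div_add hα hz),
    integral_finsetSum _ fun _ _ => Integrable.const_mul
        (integrableOn_weightedPoly_mul_stieltjesPoly (by linarith) hα (by linarith)) _]
  simp_rw [integral_const_mul, ← clPairing_eq_integral]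
  rw [Finset.sum_eq_single_of_mem k hk fun l _ hl => by rw [clPairing_eq_zero hα hl.symm, mul_zero],
    clPairing_self, div_mul_cancel₀ _ hh, ← stieltjesPoly, sub_self, mul_zero]

end Reproducing

theorem K00_K11_pointwise_zero_general (α : ℝ) (hα : -1 < α) (m : ℕ) :
    (∀ x z : ℝ, 0 < x → 0 < z →
      (∫ y in Set.Ioi (0:ℝ), K00 α m x y * K11 α m z y) = 0) ∧
    (∀ y z : ℝ, 0 < y → 0 < z →
      (∫ x in Set.Ioi (0:ℝ), K00 α m x y * K11 α m x z) = 0) := by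
  constructor
  · intro x z _ hz
    have hsum : ∀ y, K00 α m x y * K11 α m z y
        = ∑ k ∈ Finset.range m, pCL α k x / hCL α k * (qCL α k y * K11 α m z y) := fun y => by
      rw [K00, Finset.sum_mul]
      exact Finset.sum_congr rfl fun k _ => by ring
    simp only [hsum]
    rw [integral_finsetSum _ fun k _ => (integrableOn_qCL_mul_K11 hα hz).const_mul _]
    refine Finset.sum_eq_zero fun k hk => ?_
    -- `x / 0 = 0`: a term with `hₖ = 0` is absent from `K₀₀`
    rcases eq_or_ne (hCL α k) 0 with hh | hh
    · simp [hh]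
    · rw [integral_const_mul, integral_qCL_mul_K11 hα hk hh hz, mul_zero]
  · intro y z _ hz
    have hsum : ∀ x, K00 α m x y * K11 α m x z
        = ∑ k ∈ Finset.range m, qCL α k y / hCL α k * (pCL α k x * K11 α m x z) := fun x => by
      rw [K00, Finset.sum_mul]
      exact Finset.sum_congr rfl fun k _ => by ring
    simp only [hsum]
    rw [integral_finsetSum _ fun k _ => (integrableOn_pCL_mul_K11 hα hz).const_mul _]
    refine Finset.sum_eq_zero fun k hk => ?_
    rcases eq_or_ne (hCL α k) 0 with hh | hh
    · simp [hh]
    · rw [integral_const_mul, integral_pCL_mul_K11 hα hk hh hz, mul_zero]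

theorem K00_K11_pointwise_zero (α : ℝ) (hα : -1 < α) (m : ℕ) (hm : 1 ≤ m) :
    (∀ x z : ℝ, 0 < x → 0 < z →
      (∫ y in Set.Ioi (0:ℝ), K00 α m x y * K11 α m z y) = 0) ∧
    (∀ y z : ℝ, 0 < y → 0 < z →
      (∫ x in Set.Ioi (0:ℝ), K00 α m x y * K11 α m x z) = 0) :=
  K00_K11_pointwise_zero_general α hα m
end
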